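/- For all nonnegative integers m and n, sum_{j=0}^n q^{(2m+1)j} (n choose j)_{q^2} = (-q;q)_n * sum_{j=0}^m (-1)^j q^{j^2} (m choose j)_{q^2} (q^{n-j+1}; q)_j. In particular, (-q;q)_n = prod_{i=1}^n(1+q^i) divides sum_{j=0}^n q^{(2m+1)j} (n choose j)_{q^2} in Z[q]. -/

import Mathlib

open Finset

/-- Gaussian (q-)binomial coefficient, defined over any commutative ring by the
Pascal-type recurrence `[n+1, k+1] = [n, k] + q^(k+1) * [n, k+1]`. -/
def qbinom {R : Type*} [CommRing R] (q : R) : ℕ → ℕ → R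
  | _, 0 => 1
  | 0, _ + 1 => 0
  | n + 1, k + 1 => qbinom q n k + q ^ (k + 1) * qbinom q n (k + 1)

/-!
Write `H_n(x) = ∑_j [n, j]_{q²} x^j` (a Rogers–Szegő polynomial). Pascal's rule gives
`H_{n+1}(x) = x H_n(x) + H_n(q² x)`, so the left-hand sides `S(m, n) = H_n(q^(2m+1))` satisfy
`S(m, n+1) = q^(2m+1) S(m, n) + S(m+1, n)`. By induction on `n` it suffices that the alternating
sums `T(m, n)` on the right obey `(1 + q^(n+1)) T(m, n+1) = q^(2m+1) T(m, n) + T(m+1, n)`. This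
is checked by matching the coefficients of each `[m, j]_{q²}`, which agree by the
recurrence `q^j (q^(n-j); q)_(j+1) = (q^j - q^n) (q^(n-j+1); q)_j` of the q-Pochhammer factors.
-/

section qbinom

variable {R : Type*} [CommRing R] (q : R)

@[simp]
lemma qbinom_zero_right (n : ℕ) : qbinom q n 0 = 1 := by cases n <;> rfl

lemma qbinom_succ_succ (n k : ℕ) :
    qbinom q (n + 1) (k + 1) = qbinom q n k + q ^ (k + 1) * qbinom q n (k + 1) := rfl

lemma qbinom_eq_zero_of_lt : ∀ {n k : ℕ}, n < k → qbinom q n k = 0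
  | 0, _ + 1, _ => rfl
  | n + 1, k + 1, h => by
    rw [qbinom_succ_succ, qbinom_eq_zero_of_lt (by omega : n < k),
      qbinom_eq_zero_of_lt (by omega : n < k + 1)]
    ring

/-- The q-analogue of `Nat.choose_succ_right_eq`, multiplied by `q ^ k` so that no truncated
subtraction `n - k` occurs. -/
lemma qbinom_succ_right_eq (n k : ℕ) :
    q ^ k * (1 - q ^ (k + 1)) * qbinom q n (k + 1) = (q ^ k - q ^ n) * qbinom q n k := by
  induction n generalizing k with
  | zero => cases k <;> simp [qbinom]
  | succ n ih =>
    cases k with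
    | zero =>
      have h := ih 0
      simp only [qbinom_succ_succ, qbinom_zero_right] at h ⊢
      linear_combination q * h
    | succ k =>
      rw [qbinom_succ_succ, qbinom_succ_succ]
      linear_combination q ^ (k + 2) * ih (k + 1) + q * ih k

lemma sum_mul_qbinom_succ (c : ℕ → R) (m : ℕ) :
    ∑ j ∈ range (m + 2), c j * qbinom q (m + 1) j =
      ∑ j ∈ range (m + 1), (q ^ j * c j + c (j + 1)) * qbinom q m j := by
  calc
    _ = ∑ j ∈ range (m + 1), c (j + 1) * qbinom q m j +
          (∑ j ∈ range (m + 1), c (j + 1) * (q ^ (j + 1) * qbinom q m (j + 1)) +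
            c 0 * (q ^ 0 * qbinom q m 0)) := by
      simp only [sum_range_succ' _ (m + 1), qbinom_succ_succ, mul_add, sum_add_distrib,
        qbinom_zero_right, pow_zero, one_mul]
      abel
    _ = ∑ j ∈ range (m + 1), c (j + 1) * qbinom q m j +
          ∑ j ∈ range (m + 2), c j * (q ^ j * qbinom q m j) := by
      rw [sum_range_succ' (fun j ↦ c j * (q ^ j * qbinom q m j))]
    _ = _ := by
      rw [sum_range_succ _ (m + 1), qbinom_eq_zero_of_lt q (lt_add_one m), mul_zero, mul_zero,
        add_zero, ← sum_add_distrib]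
      exact sum_congr rfl fun j _ ↦ by ring

lemma pow_mul_sum_mul_qbinom (c : ℕ → R) (m : ℕ) :
    q ^ m * ∑ j ∈ range (m + 1), c j * qbinom q m j =
      c 0 + ∑ j ∈ range m,
        (q ^ (j + 1) * c (j + 1) - q ^ j * (1 - q ^ (j + 1)) * c j) * qbinom q m (j + 1) := by
  calc
    _ = ∑ j ∈ range (m + 1), q ^ j * c j * qbinom q m j -
          ∑ j ∈ range (m + 1), q ^ j * (1 - q ^ (j + 1)) * c j * qbinom q m (j + 1) := by
      rw [mul_sum, ← sum_sub_distrib]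
      exact sum_congr rfl fun j _ ↦ by linear_combination c j * qbinom_succ_right_eq q m j
    _ = _ := by
      rw [sum_range_succ', sum_range_succ _ m, qbinom_eq_zero_of_lt q (lt_add_one m)]
      simp only [mul_sub, sub_mul, sum_sub_distrib, qbinom_zero_right, pow_zero, one_mul, mul_one,
        mul_zero, add_zero]
      ring

/-- `(q^(n-j+1); q)_j = (1 - q^n) (1 - q^(n-1)) ⋯ (1 - q^(n-j+1))`, the q-analogue of
`descPochhammer`. -/
def qDescPochhammer (n j : ℕ) : R := ∏ i ∈ range j, (1 - q ^ (n - i))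

@[simp]
lemma qDescPochhammer_zero_right (n : ℕ) : qDescPochhammer q n 0 = 1 := rfl

lemma qDescPochhammer_eq_zero_of_lt {n j : ℕ} (h : n < j) : qDescPochhammer q n j = 0 :=
  prod_eq_zero (mem_range.2 h) (by simp)

lemma qDescPochhammer_succ_succ (n j : ℕ) :
    qDescPochhammer q (n + 1) (j + 1) = (1 - q ^ (n + 1)) * qDescPochhammer q n j := by
  simp [qDescPochhammer, prod_range_succ', mul_comm]

lemma pow_mul_qDescPochhammer_succ (n j : ℕ) :
    q ^ j * qDescPochhammer q n (j + 1) = (q ^ j - q ^ n) * qDescPochhammer q n j := by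
  rcases le_or_gt j n with h | h
  · obtain ⟨k, rfl⟩ := Nat.exists_eq_add_of_le h
    rw [qDescPochhammer, prod_range_succ, ← qDescPochhammer, Nat.add_sub_cancel_left]
    ring
  · rw [qDescPochhammer_eq_zero_of_lt q h,
      qDescPochhammer_eq_zero_of_lt q (h.trans (lt_add_one j)), mul_zero, mul_zero]

lemma prod_one_sub_pow_eq_qDescPochhammer (n j : ℕ) :
    ∏ i ∈ range j, (1 - q ^ (n + 1 - j + i)) = qDescPochhammer q n j := by
  rcases le_or_gt j (n + 1) with h | h
  · rw [qDescPochhammer, ← prod_range_reflect]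
    exact prod_congr rfl fun i hi ↦ by rw [mem_range] at hi; congr 2; omega
  · rw [qDescPochhammer_eq_zero_of_lt q (by omega)]
    exact prod_eq_zero (i := 0) (mem_range.2 (by omega))
      (by rw [show n + 1 - j + 0 = 0 by omega, pow_zero, sub_self])

def rogersSzego (Q x : R) (n : ℕ) : R := ∑ j ∈ range (n + 1), x ^ j * qbinom Q n j

lemma rogersSzego_zero (Q x : R) : rogersSzego Q x 0 = 1 := by simp [rogersSzego]

lemma rogersSzego_succ (Q x : R) (n : ℕ) :
    rogersSzego Q x (n + 1) = x * rogersSzego Q x n + rogersSzego Q (Q * x) n := by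
  rw [rogersSzego, sum_mul_qbinom_succ, rogersSzego, rogersSzego, mul_sum, ← sum_add_distrib]
  exact sum_congr rfl fun j _ ↦ by ring

def altQBinomSum (m n : ℕ) : R :=
  ∑ j ∈ range (m + 1), (-1) ^ j * q ^ (j ^ 2) * qDescPochhammer q n j * qbinom (q ^ 2) m j

lemma altQBinomSum_zero_right (m : ℕ) : altQBinomSum q m 0 = 1 := by
  simp [altQBinomSum, sum_range_succ', qDescPochhammer_eq_zero_of_lt]

lemma one_add_pow_mul_altQBinomSum_succ (m n : ℕ) :
    (1 + q ^ (n + 1)) * altQBinomSum q m (n + 1) =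
      q ^ (2 * m + 1) * altQBinomSum q m n + altQBinomSum q (m + 1) n := by
  -- Expand all three sides as combinations of the `[m, j]_{q²}`: `q ^ (2 * m)` is absorbed by
  -- `qbinom_succ_right_eq`, and `[m + 1, j]` is split by Pascal's rule.
  let c : ℕ → R := fun j ↦ (-1) ^ j * q ^ (j ^ 2) * qDescPochhammer q n j
  have hL : (1 + q ^ (n + 1)) * altQBinomSum q m (n + 1) = ∑ j ∈ range m,
      (1 + q ^ (n + 1)) * ((-1) ^ (j + 1) * q ^ ((j + 1) ^ 2) *
        ((1 - q ^ (n + 1)) * qDescPochhammer q n j) * qbinom (q ^ 2) m (j + 1)) +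
      (1 + q ^ (n + 1)) := by
    simp [altQBinomSum, sum_range_succ', qDescPochhammer_succ_succ, mul_add, mul_sum]
  have hA : q ^ (2 * m + 1) * altQBinomSum q m n = q * (c 0 + ∑ j ∈ range m,
      ((q ^ 2) ^ (j + 1) * c (j + 1) - (q ^ 2) ^ j * (1 - (q ^ 2) ^ (j + 1)) * c j) *
        qbinom (q ^ 2) m (j + 1)) := by
    rw [← pow_mul_sum_mul_qbinom, pow_add, pow_one, pow_mul, mul_comm _ q, mul_assoc]
    rfl
  have hB : altQBinomSum q (m + 1) n = ∑ j ∈ range m,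
      ((q ^ 2) ^ (j + 1) * c (j + 1) + c (j + 2)) * qbinom (q ^ 2) m (j + 1) + (c 0 + c 1) := by
    rw [altQBinomSum, sum_mul_qbinom_succ (c := c), sum_range_succ']
    simp
  have hsum : ∑ j ∈ range m,
      (1 + q ^ (n + 1)) * ((-1) ^ (j + 1) * q ^ ((j + 1) ^ 2) *
        ((1 - q ^ (n + 1)) * qDescPochhammer q n j) * qbinom (q ^ 2) m (j + 1)) =
      q * ∑ j ∈ range m,
        ((q ^ 2) ^ (j + 1) * c (j + 1) - (q ^ 2) ^ j * (1 - (q ^ 2) ^ (j + 1)) * c j) *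
          qbinom (q ^ 2) m (j + 1) +
      ∑ j ∈ range m,
        ((q ^ 2) ^ (j + 1) * c (j + 1) + c (j + 2)) * qbinom (q ^ 2) m (j + 1) := by
    rw [mul_sum, ← sum_add_distrib]
    refine sum_congr rfl fun j _ ↦ ?_
    have r1 := pow_mul_qDescPochhammer_succ q n j
    have r2 := pow_mul_qDescPochhammer_succ q n (j + 1)
    simp only [c]
    linear_combination (-1) ^ (j + 1) * q ^ ((j + 1) ^ 2) * qbinom (q ^ 2) m (j + 1) *
      (q ^ (j + 2) * r2 - (q ^ (j + 2) + q ^ (n + 2)) * r1)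
  have hc0 : c 0 = 1 := by simp [c]
  have hc1 : c 1 = -q * (1 - q ^ n) := by simp [c, qDescPochhammer]
  rw [hL, hA, hB, hsum]
  linear_combination -(q + 1) * hc0 - hc1

theorem rogersSzego_eq_prod_mul_altQBinomSum (n m : ℕ) :
    rogersSzego (q ^ 2) (q ^ (2 * m + 1)) n =
      (∏ i ∈ range n, (1 + q ^ (i + 1))) * altQBinomSum q m n := by
  induction n generalizing m with
  | zero => simp [rogersSzego_zero, altQBinomSum_zero_right]
  | succ n ih =>
    have hx : q ^ 2 * q ^ (2 * m + 1) = q ^ (2 * (m + 1) + 1) := by ring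
    rw [rogersSzego_succ, hx, ih, ih, prod_range_succ]
    linear_combination -(∏ i ∈ range n, (1 + q ^ (i + 1))) *
      one_add_pow_mul_altQBinomSum_succ q m n

end qbinom

open Polynomial in
theorem stmt16 (m n : ℕ) :
    (∑ j ∈ Finset.range (n + 1), (X : ℤ[X]) ^ ((2 * m + 1) * j) * qbinom ((X : ℤ[X]) ^ 2) n j =
      (∏ i ∈ Finset.range n, (1 + (X : ℤ[X]) ^ (i + 1))) *
        ∑ j ∈ Finset.range (m + 1),
          (-1 : ℤ[X]) ^ j * X ^ (j ^ 2) * qbinom ((X : ℤ[X]) ^ 2) m j *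
            ∏ i ∈ Finset.range j, (1 - (X : ℤ[X]) ^ (n + 1 - j + i))) ∧
    (∏ i ∈ Finset.range n, (1 + (X : ℤ[X]) ^ (i + 1))) ∣
      ∑ j ∈ Finset.range (n + 1), (X : ℤ[X]) ^ ((2 * m + 1) * j) * qbinom ((X : ℤ[X]) ^ 2) n j := by
  have hS : ∑ j ∈ range (n + 1), (X : ℤ[X]) ^ ((2 * m + 1) * j) * qbinom (X ^ 2) n j =
      rogersSzego (X ^ 2) (X ^ (2 * m + 1)) n :=
    sum_congr rfl fun j _ ↦ by rw [pow_mul]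
  have hT : ∑ j ∈ range (m + 1), (-1 : ℤ[X]) ^ j * X ^ (j ^ 2) * qbinom (X ^ 2) m j *
      ∏ i ∈ range j, (1 - (X : ℤ[X]) ^ (n + 1 - j + i)) = altQBinomSum X m n :=
    sum_congr rfl fun j _ ↦ by rw [prod_one_sub_pow_eq_qDescPochhammer]; ring
  rw [hS, hT]
  have key := rogersSzego_eq_prod_mul_altQBinomSum (X : ℤ[X]) n m
  exact ⟨key, Dvd.intro _ key.symm⟩
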